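/- For all nonnegative integers h, k, one has the polynomial identity in ℤ[q]: Σ_{j=0}^{h} q^{(h−j)(k−j)} [k choose j]_q [h choose j]_q Σ_{i=0}^{j} q^{binom(i+1,2)} [j choose i]_q = Σ_{i=0}^{h} q^{binom(i+1,2)} [k choose i]_q [h+k−i choose h−i]_q; equivalently, Σ_{j=0}^{h} q^{(h−j)(k−j)} (−q;q)_j [k choose j]_q [h choose j]_q = Σ_{i=0}^{h} q^{binom(i+1,2)} [k choose i]_q [h+k−i choose h−i]_q. -/
import Mathlib


open Polynomial Finset

/-- The Gaussian (q-)binomial coefficient `[h choose k]_q` as a polynomial in `ℤ[q]`,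
defined via the q-Pascal recurrence; it equals
`([h]_q [h−1]_q ⋯ [h−k+1]_q)/([k]_q ⋯ [1]_q)`. -/
noncomputable def qBinom : ℕ → ℕ → Polynomial ℤ
  | _, 0 => 1
  | 0, _ + 1 => 0
  | h + 1, k + 1 => qBinom h k + Polynomial.X ^ (k + 1) * qBinom h (k + 1)

/-- The q-Delannoy number `D_q(h,k) = Σ_{j=0}^{h} q^{binom(j+1,2)} [k choose j]_q
[h+k−j choose k]_q`. -/
noncomputable def qDelannoy (h k : ℕ) : Polynomial ℤ :=
  ∑ j ∈ Finset.range (h + 1),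
    Polynomial.X ^ ((j + 1).choose 2) * qBinom k j * qBinom (h + k - j) k

/-- The Delannoy number `D(h,k) = Σ_{j=0}^{h} binom(k,j) binom(h+k−j,k)`. -/
def delannoy (h k : ℕ) : ℕ :=
  ∑ j ∈ Finset.range (h + 1), k.choose j * (h + k - j).choose k

/-- The q-Pochhammer symbol `(−q;q)_j = Π_{i=1}^{j} (1 + q^i)` in `ℤ[q]`. -/
noncomputable def qPoch (j : ℕ) : Polynomial ℤ :=
  ∏ i ∈ Finset.range j, (1 + Polynomial.X ^ (i + 1))

noncomputable def qInt (n : ℕ) : Polynomial ℤ := ∑ i ∈ Finset.range n, Polynomial.X ^ i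

noncomputable def qfac (n : ℕ) : Polynomial ℤ := ∏ i ∈ Finset.range n, qInt (i + 1)

lemma qBinom_zero_right (n : ℕ) : qBinom n 0 = 1 := by cases n <;> rfl

lemma qBinom_succ_succ (h k : ℕ) :
    qBinom (h+1) (k+1) = qBinom h k + Polynomial.X ^ (k+1) * qBinom h (k+1) := rfl

lemma qBinom_eq_zero : ∀ {n k : ℕ}, n < k → qBinom n k = 0 := by
  intro n
  induction n with
  | zero => intro k hk; match k, hk with | k+1, _ => rfl
  | succ n ih =>
    intro k hk
    match k, hk with
    | k+1, hk =>
      rw [qBinom_succ_succ, ih (by omega), ih (by omega), mul_zero, add_zero]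

lemma qBinom_self (n : ℕ) : qBinom n n = 1 := by
  induction n with
  | zero => rfl
  | succ n ih => rw [qBinom_succ_succ, ih, qBinom_eq_zero (by omega), mul_zero, add_zero]

lemma qInt_add (a b : ℕ) : qInt a + Polynomial.X ^ a * qInt b = qInt (a + b) := by
  simp only [qInt, Finset.sum_range_add, pow_add, Finset.mul_sum]

lemma qfac_succ (n : ℕ) : qfac (n + 1) = qfac n * qInt (n + 1) := Finset.prod_range_succ _ _

lemma qfac_ne_zero (n : ℕ) : qfac n ≠ 0 := by
  intro h
  have h1 : Polynomial.eval 1 (qfac n) = 0 := by rw [h]; simp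
  have h2 : Polynomial.eval 1 (qfac n) = ∏ i ∈ Finset.range n, ((i : ℤ) + 1) := by
    simp [qfac, qInt, Polynomial.eval_prod, Polynomial.eval_finset_sum]
  have h3 : (0:ℤ) < ∏ i ∈ Finset.range n, ((i : ℤ) + 1) :=
    Finset.prod_pos (fun i _ => by positivity)
  rw [h1] at h2; omega

lemma qfac_mul_qBinom : ∀ (n k : ℕ), k ≤ n →
    qfac k * qfac (n - k) * qBinom n k = qfac n := by
  intro n
  induction n with
  | zero => intro k hk; interval_cases k; simp [qfac, qBinom_zero_right]
  | succ n ih =>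
    intro k hk
    match k with
    | 0 => simp [qfac, qBinom_zero_right]
    | k + 1 =>
      by_cases hkn : k = n
      · subst hkn
        simp [qBinom_self, qfac]
      · have hk' : k + 1 ≤ n := by omega
        have e1 : n + 1 - (k + 1) = (n - (k+1)) + 1 := by omega
        have e2 : n - k = n - (k+1) + 1 := by omega
        have h1 := ih k (by omega)
        have h2 := ih (k+1) hk'
        rw [e2] at h1
        rw [qfac_succ (n - (k+1))] at h1
        have hadd : qInt (k+1) + Polynomial.X ^ (k+1) * qInt (n - (k+1) + 1) = qInt (n+1) := by
          rw [qInt_add]; congr 1; omega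
        rw [qBinom_succ_succ, e1, qfac_succ (n - (k+1)), qfac_succ k, qfac_succ n]
        rw [qfac_succ k] at h2
        linear_combination (qInt (k+1)) * h1 +
          (Polynomial.X ^ (k+1) * qInt (n - (k+1) + 1)) * h2 + qfac n * hadd

lemma qBinom_pascal' (n k : ℕ) :
    qBinom (n+1) (k+1) = Polynomial.X ^ (n - k) * qBinom n k + qBinom n (k+1) := by
  rcases lt_trichotomy k n with h | h | h
  · -- k < n; cancellation
    apply mul_left_cancel₀ (mul_ne_zero (qfac_ne_zero (k+1)) (qfac_ne_zero (n-k)))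
    have hL := qfac_mul_qBinom (n+1) (k+1) (by omega)
    have e1 : n + 1 - (k + 1) = n - k := by omega
    rw [e1] at hL
    have h1 := qfac_mul_qBinom n k (by omega)
    have h2 := qfac_mul_qBinom n (k+1) (by omega)
    have e2 : n - k = n - (k+1) + 1 := by omega
    have hadd : qInt (n - (k+1) + 1) + Polynomial.X ^ (n - (k+1) + 1) * qInt (k+1) = qInt (n+1) := by
      rw [qInt_add]; congr 1; omega
    rw [e2] at h1 hL ⊢
    rw [qfac_succ (n - (k+1))] at h1 hL ⊢
    rw [qfac_succ k] at hL ⊢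
    rw [qfac_succ k] at h2
    have hfn : qfac (n+1) = qfac n * qInt (n+1) := qfac_succ n
    rw [hfn] at hL
    linear_combination hL - (Polynomial.X ^ (n - (k+1) + 1) * qInt (k+1)) * h1 -
      (qInt (n - (k+1) + 1)) * h2 - qfac n * hadd
  · subst h
    rw [qBinom_self, qBinom_self, qBinom_eq_zero (by omega), Nat.sub_self, pow_zero,
      one_mul, add_zero]
  · rw [qBinom_eq_zero (by omega), qBinom_eq_zero (by omega), qBinom_eq_zero (by omega),
      mul_zero, add_zero]

lemma qBinom_symm {n k : ℕ} (h : k ≤ n) : qBinom n k = qBinom n (n - k) := by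
  apply mul_left_cancel₀ (mul_ne_zero (qfac_ne_zero k) (qfac_ne_zero (n-k)))
  have h1 := qfac_mul_qBinom n k h
  have h2 := qfac_mul_qBinom n (n-k) (by omega)
  have e : n - (n - k) = k := by omega
  rw [e] at h2
  linear_combination h1 - h2

lemma qBinom_trinomial {k j i : ℕ} (hij : i ≤ j) :
    qBinom k j * qBinom j i = qBinom k i * qBinom (k - i) (j - i) := by
  by_cases hjk : j ≤ k
  · apply mul_left_cancel₀
      (mul_ne_zero (mul_ne_zero (qfac_ne_zero i) (qfac_ne_zero (j-i))) (qfac_ne_zero (k-j)))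
    have h1 := qfac_mul_qBinom k j hjk
    have h2 := qfac_mul_qBinom j i hij
    have h3 := qfac_mul_qBinom k i (le_trans hij hjk)
    have h4 := qfac_mul_qBinom (k-i) (j-i) (by omega)
    have e : k - i - (j - i) = k - j := by omega
    rw [e] at h4
    linear_combination (qfac (k-j) * qBinom k j) * h2 + h1 - (qfac i * qBinom k i) * h4 - h3
  · rw [qBinom_eq_zero (by omega), zero_mul]
    by_cases hik : i ≤ k
    · rw [qBinom_eq_zero (show k - i < j - i by omega), mul_zero]
    · rw [qBinom_eq_zero (show k < i by omega), zero_mul]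

lemma qVandermonde (K : ℕ) : ∀ (a h : ℕ),
    (∑ m ∈ Finset.range (a+1),
      Polynomial.X ^ ((a-m)*(K-m)) * qBinom h (a-m) * qBinom K m) = qBinom (h+K) a := by
  induction K with
  | zero =>
    intro a h
    rw [Finset.sum_eq_single_of_mem 0 (Finset.mem_range.mpr (by omega))]
    · simp [qBinom_zero_right]
    · intro m _ hm
      match m, hm with
      | m+1, _ => rw [qBinom_eq_zero (show 0 < m+1 by omega), mul_zero]
  | succ K ih =>
    intro a h
    match a with
    | 0 => simp [qBinom_zero_right]
    | b + 1 =>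
      rw [Finset.sum_range_succ']
      have hsplit : ∀ t ∈ Finset.range (b+1),
          Polynomial.X ^ ((b+1-(t+1))*(K+1-(t+1))) * qBinom h (b+1-(t+1)) * qBinom (K+1) (t+1)
          = Polynomial.X ^ ((b-t)*(K-t)) * qBinom h (b-t) * qBinom K t
            + Polynomial.X ^ (b+1) *
              (Polynomial.X ^ ((b+1-(t+1))*(K-(t+1))) * qBinom h (b+1-(t+1)) * qBinom K (t+1)) := by
        intro t ht
        simp only [Nat.succ_sub_succ]
        rw [qBinom_succ_succ]
        have key : Polynomial.X ^ ((b-t)*(K-t)) * qBinom h (b-t) *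
            (Polynomial.X ^ (t+1) * qBinom K (t+1))
            = Polynomial.X ^ (b+1) *
              (Polynomial.X ^ ((b-t)*(K-(t+1))) * qBinom h (b-t) * qBinom K (t+1)) := by
          by_cases htK : t < K
          · have e : (b-t)*(K-t) + (t+1) = (b+1) + (b-t)*(K-(t+1)) := by
              have h1 : K - t = K - (t+1) + 1 := by omega
              rw [h1, Nat.mul_add, Nat.mul_one]
              have h2 : t ∈ Finset.range (b+1) := ht
              have h3 : t ≤ b := by simpa using Nat.lt_succ_iff.mp (Finset.mem_range.mp h2)
              omega
            calc Polynomial.X ^ ((b-t)*(K-t)) * qBinom h (b-t) *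
                  (Polynomial.X ^ (t+1) * qBinom K (t+1))
                = Polynomial.X ^ ((b-t)*(K-t) + (t+1)) * qBinom h (b-t) * qBinom K (t+1) := by
                  rw [pow_add]; ring
              _ = _ := by rw [e, pow_add]; ring
          · rw [qBinom_eq_zero (show K < t+1 by omega)]; ring
        rw [mul_add, key]
      rw [Finset.sum_congr rfl hsplit, Finset.sum_add_distrib]
      have hfirst : (∑ t ∈ Finset.range (b+1),
          Polynomial.X ^ ((b-t)*(K-t)) * qBinom h (b-t) * qBinom K t) = qBinom (h+K) b := ih b h
      have hzero : Polynomial.X ^ ((b+1-0)*(K+1-0)) * qBinom h (b+1-0) * qBinom (K+1) 0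
          = Polynomial.X ^ (b+1) *
            (Polynomial.X ^ ((b+1-0)*(K-0)) * qBinom h (b+1-0) * qBinom K 0) := by
        simp only [Nat.sub_zero, qBinom_zero_right, mul_one]
        rw [← mul_assoc, ← pow_add]
        congr 1
        ring
      rw [hfirst, hzero, ← Finset.mul_sum, add_assoc, ← mul_add,
        ← Finset.sum_range_succ'
          (fun m => Polynomial.X ^ ((b+1-m)*(K-m)) * qBinom h (b+1-m) * qBinom K m) (b+1)]
      rw [ih (b+1) h]
      have : h + (K + 1) = (h + K) + 1 := by omega
      rw [this, qBinom_succ_succ]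

lemma choose_two_succ (t : ℕ) : (t+2).choose 2 = (t+1).choose 2 + (t+1) := by
  have h0 : (t+2).choose 2 = (t+1).choose 1 + (t+1).choose 2 := rfl
  rw [h0, Nat.choose_one_right]
  omega

lemma qPoch_eq (j : ℕ) :
    qPoch j = ∑ i ∈ Finset.range (j+1), Polynomial.X ^ ((i+1).choose 2) * qBinom j i := by
  induction j with
  | zero => simp [qPoch, qBinom_zero_right]
  | succ j ih =>
    have hrec : qPoch (j+1) = qPoch j * (1 + Polynomial.X ^ (j+1)) := Finset.prod_range_succ _ _
    rw [hrec, ih]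
    rw [Finset.sum_range_succ' (fun i => Polynomial.X ^ ((i+1).choose 2) * qBinom (j+1) i) (j+1)]
    have hterm : ∀ t ∈ Finset.range (j+1),
        Polynomial.X ^ ((t+2).choose 2) * qBinom (j+1) (t+1)
        = Polynomial.X ^ (j+1) * (Polynomial.X ^ ((t+1).choose 2) * qBinom j t)
          + Polynomial.X ^ ((t+2).choose 2) * qBinom j (t+1) := by
      intro t ht
      have htj : t ≤ j := Nat.lt_succ_iff.mp (Finset.mem_range.mp ht)
      rw [qBinom_pascal', mul_add]
      congr 1
      rw [← mul_assoc, ← pow_add, ← mul_assoc, ← pow_add]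
      congr 2
      rw [choose_two_succ]
      omega
    rw [Finset.sum_congr rfl hterm, Finset.sum_add_distrib]
    have hA : (∑ t ∈ Finset.range (j+1),
        Polynomial.X ^ (j+1) * (Polynomial.X ^ ((t+1).choose 2) * qBinom j t))
        = Polynomial.X ^ (j+1) * ∑ i ∈ Finset.range (j+1),
            Polynomial.X ^ ((i+1).choose 2) * qBinom j i := by rw [Finset.mul_sum]
    have hB : (∑ t ∈ Finset.range (j+1), Polynomial.X ^ ((t+2).choose 2) * qBinom j (t+1))
          + Polynomial.X ^ ((0+1).choose 2) * qBinom (j+1) 0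
        = ∑ i ∈ Finset.range (j+1), Polynomial.X ^ ((i+1).choose 2) * qBinom j i := by
      have h1 := Finset.sum_range_succ'
        (fun i => Polynomial.X ^ ((i+1).choose 2) * qBinom j i) (j+1)
      have h2 : (∑ i ∈ Finset.range (j+1+1), Polynomial.X ^ ((i+1).choose 2) * qBinom j i)
          = ∑ i ∈ Finset.range (j+1), Polynomial.X ^ ((i+1).choose 2) * qBinom j i := by
        rw [Finset.sum_range_succ, qBinom_eq_zero (show j < j+1 by omega), mul_zero, add_zero]
      rw [← h2, h1]
      congr 1
      simp [qBinom_zero_right]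
    rw [add_assoc, hA, hB]
    ring

lemma main_sum (h k : ℕ) :
    (∑ j ∈ Finset.range (h + 1),
        Polynomial.X ^ ((h - j) * (k - j)) * qBinom k j * qBinom h j *
          ∑ i ∈ Finset.range (j + 1),
            Polynomial.X ^ ((i + 1).choose 2) * qBinom j i) =
      (∑ i ∈ Finset.range (h + 1),
        Polynomial.X ^ ((i + 1).choose 2) * qBinom k i * qBinom (h + k - i) (h - i)) := by
  -- Step A: extend inner sum to range (h+1)
  have stepA : ∀ j ∈ Finset.range (h+1),
      Polynomial.X ^ ((h - j) * (k - j)) * qBinom k j * qBinom h j *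
        (∑ i ∈ Finset.range (j + 1), Polynomial.X ^ ((i + 1).choose 2) * qBinom j i)
      = ∑ i ∈ Finset.range (h + 1),
          Polynomial.X ^ ((h - j) * (k - j)) * qBinom k j * qBinom h j *
            (Polynomial.X ^ ((i + 1).choose 2) * qBinom j i) := by
    intro j hj
    rw [Finset.mul_sum]
    apply Finset.sum_subset
    · exact Finset.range_subset_range.mpr (by simp at hj; omega)
    · intro i _ hi
      simp only [Finset.mem_range, not_lt] at hi
      rw [qBinom_eq_zero (show j < i by omega)]
      ring
  rw [Finset.sum_congr rfl stepA, Finset.sum_comm]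
  apply Finset.sum_congr rfl
  intro i hi
  have hih : i ≤ h := Nat.lt_succ_iff.mp (Finset.mem_range.mp hi)
  -- Step C: per i
  have e : h + 1 = i + (h - i + 1) := by omega
  rw [e, Finset.sum_range_add]
  have hlow : (∑ j ∈ Finset.range i,
      Polynomial.X ^ ((h - j) * (k - j)) * qBinom k j * qBinom h j *
        (Polynomial.X ^ ((i + 1).choose 2) * qBinom j i)) = 0 := by
    apply Finset.sum_eq_zero
    intro j hj
    rw [qBinom_eq_zero (show j < i from Finset.mem_range.mp hj)]
    ring
  rw [hlow, zero_add]
  have hterm : ∀ t ∈ Finset.range (h - i + 1),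
      Polynomial.X ^ ((h - (i+t)) * (k - (i+t))) * qBinom k (i+t) * qBinom h (i+t) *
        (Polynomial.X ^ ((i + 1).choose 2) * qBinom (i+t) i)
      = (Polynomial.X ^ ((i + 1).choose 2) * qBinom k i) *
          (Polynomial.X ^ ((h-i-t) * (k-i-t)) * qBinom h (h-i-t) * qBinom (k-i) t) := by
    intro t ht
    have htle : t ≤ h - i := Nat.lt_succ_iff.mp (Finset.mem_range.mp ht)
    have htri := qBinom_trinomial (k := k) (j := i + t) (i := i) (by omega)
    have e1 : i + t - i = t := by omega
    rw [e1] at htri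
    have hsym : qBinom h (i+t) = qBinom h (h - i - t) := by
      rw [qBinom_symm (show i + t ≤ h by omega)]
      congr 1
      omega
    have e2 : h - (i+t) = h - i - t := by omega
    have e3 : k - (i+t) = k - i - t := by omega
    rw [e2, e3, hsym]
    linear_combination (Polynomial.X ^ ((h-i-t)*(k-i-t)) * qBinom h (h-i-t) *
      Polynomial.X ^ ((i+1).choose 2)) * htri
  rw [Finset.sum_congr rfl hterm, ← Finset.mul_sum]
  have hvdm := qVandermonde (k - i) (h - i) h
  have hexp : ∀ t, (h - i - t) * (k - i - t) = ((h-i) - t) * ((k-i) - t) := by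
    intro t; rfl
  rw [show (∑ t ∈ Finset.range (h - i + 1),
      Polynomial.X ^ ((h-i-t) * (k-i-t)) * qBinom h (h-i-t) * qBinom (k-i) t)
      = qBinom (h + (k-i)) (h-i) from hvdm]
  by_cases hik : i ≤ k
  · have e4 : h + (k - i) = h + k - i := by omega
    rw [e4]
  · rw [qBinom_eq_zero (show k < i by omega)]
    ring

theorem qVandermonde_delannoy (h k : ℕ) :
    (∑ j ∈ Finset.range (h + 1),
        Polynomial.X ^ ((h - j) * (k - j)) * qBinom k j * qBinom h j *
          ∑ i ∈ Finset.range (j + 1),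
            Polynomial.X ^ ((i + 1).choose 2) * qBinom j i) =
      (∑ i ∈ Finset.range (h + 1),
        Polynomial.X ^ ((i + 1).choose 2) * qBinom k i * qBinom (h + k - i) (h - i)) ∧
    (∑ j ∈ Finset.range (h + 1),
        Polynomial.X ^ ((h - j) * (k - j)) * qPoch j * qBinom k j * qBinom h j) =
      (∑ i ∈ Finset.range (h + 1),
        Polynomial.X ^ ((i + 1).choose 2) * qBinom k i * qBinom (h + k - i) (h - i)) := by
  constructor
  · exact main_sum h k
  · rw [← main_sum h k]
    apply Finset.sum_congr rfl
    intro j _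
    rw [qPoch_eq]
    ring
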